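/- arXiv:1706.06034 — 2 statements merged into one kernel-verified Lean document; each statement's English description precedes it below -/
import Mathlib

section
/- Let g be a graded Lie algebra with one-dimensional center, gradation g = ⊕_{k=1}^N g_k with N = 2N₀ even, and suppose B_l is non-degenerate on g/z(g) for l = λZ*, λ ≠ 0. Then the restriction of B_l to g_{N₀} × g_{N₀} is a non-degenerate alternating (symplectic) form, so dim g_{N₀} is even; choosing a Lagrangian subspace L ⊆ g_{N₀} for this form, m := L ⊕ (⊕_{k=N₀+1}^N g_k) is an Abelian ideal of g of dimension (dim g + 1)/2 with l([m,m]) = 0. -/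
/-!
For `k < N`, the form `B_l(x, y) = l ⁅x, y⁆` pairs `g_k` with `g_{N-k}` non-degenerately: if
`l ⁅x, g_{N-k}⁆ = 0` for `x ∈ g_k`, then `l ⁅x, g⁆ = 0` because `l` only sees degree `N`, so `x`
is central, i.e. lies in `g_N`, and hence vanishes. This gives the symplectic form on `g_{N₀}` and
`dim g_k = dim g_{N-k}` for `0 < k < N`; since `dim g_N = 1`, counting gives
`2d + 2 = dim g_{N₀} + 2 dim (⊕_{k > N₀} g_k)`, whence the parity of `dim g_{N₀}` and
`dim m = d + 1`. All brackets inside `m` land in degrees `> N`, where `g` vanishes, except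
`⁅L₀, L₀⁆ ⊆ g_N`, on which `l` is injective; and `⁅g_k, m⁆` has degree `> N₀` since `g_0 = 0`.
-/

open Module

section LinearAlgebra

variable {K V W : Type*} [Field K] [AddCommGroup V] [Module K V] [AddCommGroup W] [Module K W]

theorem finrank_sup_of_disjoint {s t : Submodule K V} [FiniteDimensional K s]
    [FiniteDimensional K t] (h : Disjoint s t) :
    finrank K (s ⊔ t : Submodule K V) = finrank K s + finrank K t := by
  rw [← Submodule.finrank_sup_add_finrank_inf_eq, h.eq_bot, finrank_bot, add_zero]

theorem finrank_biSup_eq_sum_of_iSupIndep [FiniteDimensional K V] {ι : Type*} [DecidableEq ι]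
    {p : ι → Submodule K V} (hp : iSupIndep p) (s : Finset ι) :
    finrank K (⨆ i ∈ s, p i : Submodule K V) = ∑ i ∈ s, finrank K (p i) := by
  induction s using Finset.induction_on with
  | empty => simp
  | insert a s ha ih =>
    have hdisj : Disjoint (p a) (⨆ i ∈ s, p i) := by
      simpa only [Finset.iSup_coe] using hp.disjoint_biSup (y := ↑s) (by simpa using ha)
    rw [Finset.iSup_insert, Finset.sum_insert ha, ← ih, finrank_sup_of_disjoint hdisj]

theorem finrank_le_finrank_of_separatingLeft [FiniteDimensional K W]
    {B : V →ₗ[K] W →ₗ[K] K} (hB : B.SeparatingLeft) : finrank K V ≤ finrank K W :=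
  (LinearMap.finrank_le_finrank_of_injective
    (LinearMap.ker_eq_bot.mp (LinearMap.separatingLeft_iff_ker_eq_bot.mp hB))).trans_eq
    Subspace.dual_finrank_eq

theorem LinearMap.injective_of_finrank_eq_one {f : V →ₗ[K] K} (hV : finrank K V = 1)
    (hf : f ≠ 0) : Function.Injective f := by
  obtain ⟨v, hv⟩ : ∃ v, f v ≠ 0 := by
    by_contra! h
    exact hf (LinearMap.ext h)
  have hv0 : v ≠ 0 := fun h => hv (h ▸ map_zero f)
  rw [← LinearMap.ker_eq_bot, Submodule.eq_bot_iff]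
  intro w hw
  obtain ⟨c, rfl⟩ := (finrank_eq_one_iff_of_nonzero' v hv0).mp hV w
  rw [LinearMap.mem_ker, map_smul, smul_eq_mul, mul_eq_zero] at hw
  rw [hw.resolve_right hv, zero_smul]

end LinearAlgebra

theorem LinearMap.eq_zero_of_iSup_eq_top {R M M₂ : Type*} [Semiring R] [AddCommMonoid M]
    [Module R M] [AddCommMonoid M₂] [Module R M₂] {ι : Sort*} {p : ι → Submodule R M}
    (hp : ⨆ i, p i = ⊤) {f : M →ₗ[R] M₂} (hf : ∀ i, ∀ x ∈ p i, f x = 0) : f = 0 := by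
  rw [← LinearMap.ker_eq_top, eq_top_iff, ← hp]
  exact iSup_le fun i x hx => hf i x hx

theorem sum_Icc_add_one_eq_of_symm (T : ℕ → ℕ) {n : ℕ} (hn : 1 ≤ n) (htop : T (2 * n) = 1)
    (hsymm : ∀ k, 0 < k → k < n → T k = T (2 * n - k)) :
    ∑ k ∈ Finset.Icc 1 (2 * n), T k + 1 = T n + 2 * ∑ k ∈ Finset.Icc (n + 1) (2 * n), T k := by
  simp only [← Finset.Ico_add_one_right_eq_Icc]
  have hlow : ∑ k ∈ Finset.Ico 1 n, T k = ∑ k ∈ Finset.Ico (n + 1) (2 * n), T k := by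
    rw [Finset.sum_congr rfl fun k hk => hsymm k (by simp at hk; omega) (Finset.mem_Ico.mp hk).2,
      Finset.sum_Ico_reflect T 1 (by omega : n ≤ 2 * n + 1),
      show 2 * n + 1 - n = n + 1 by omega, Nat.add_sub_cancel]
  rw [← Finset.sum_Ico_consecutive T hn (by omega : n ≤ 2 * n + 1),
    Finset.sum_eq_sum_Ico_succ_bot (by omega : n < 2 * n + 1),
    Finset.sum_Ico_succ_top (by omega : n + 1 ≤ 2 * n), hlow, htop]
  ring

section LieAlgebra

variable {R L : Type*} [CommRing R] [LieRing L] [LieAlgebra R L]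

def lieForm (l : L →ₗ[R] R) : L →ₗ[R] L →ₗ[R] R :=
  (LieModule.toEnd R L L : L →ₗ[R] Module.End R L).compr₂ l

theorem lie_mem_of_mem_biSup {ι κ : Type*} {p : ι → Submodule R L} {q : κ → Submodule R L}
    {s : Finset ι} {t : Finset κ} {P : Submodule R L}
    (h : ∀ i ∈ s, ∀ j ∈ t, ∀ x ∈ p i, ∀ y ∈ q j, ⁅x, y⁆ ∈ P) {x y : L}
    (hx : x ∈ ⨆ i ∈ s, p i) (hy : y ∈ ⨆ j ∈ t, q j) : ⁅x, y⁆ ∈ P := by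
  obtain ⟨μ, rfl⟩ := (Submodule.mem_iSup_finset_iff_exists_sum p x).mp hx
  obtain ⟨ν, rfl⟩ := (Submodule.mem_iSup_finset_iff_exists_sum q y).mp hy
  simp only [sum_lie, lie_sum]
  exact sum_mem fun j hj => sum_mem fun i hi => h i hi j hj _ (μ i).2 _ (ν j).2

section Graded

variable {gr : ℕ → Submodule R L} {N : ℕ}

theorem lie_mem_biSup_Icc (hbr : ∀ k k' : ℕ, ∀ x ∈ gr k, ∀ y ∈ gr k', ⁅x, y⁆ ∈ gr (k + k'))
    (htop : ∀ k, N < k → gr k = ⊥) {a b : ℕ} {x y : L}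
    (hx : x ∈ ⨆ i ∈ Finset.Icc a N, gr i) (hy : y ∈ ⨆ j ∈ Finset.Icc b N, gr j) :
    ⁅x, y⁆ ∈ ⨆ k ∈ Finset.Icc (a + b) N, gr k := by
  refine lie_mem_of_mem_biSup (fun i hi j hj x hx y hy => ?_) hx hy
  have hxy := hbr i j x hx y hy
  rw [Finset.mem_Icc] at hi hj
  rcases le_or_gt (i + j) N with hle | hgt
  · exact Submodule.mem_iSup_of_mem (i + j)
      (Submodule.mem_iSup_of_mem (Finset.mem_Icc.mpr ⟨by omega, hle⟩) hxy)
  · rw [htop _ hgt, Submodule.mem_bot] at hxy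
    rw [hxy]
    exact zero_mem _

theorem lie_eq_zero_of_mem_biSup_Icc
    (hbr : ∀ k k' : ℕ, ∀ x ∈ gr k, ∀ y ∈ gr k', ⁅x, y⁆ ∈ gr (k + k'))
    (htop : ∀ k, N < k → gr k = ⊥) {a b : ℕ} (hab : N < a + b) {x y : L}
    (hx : x ∈ ⨆ i ∈ Finset.Icc a N, gr i) (hy : y ∈ ⨆ j ∈ Finset.Icc b N, gr j) :
    ⁅x, y⁆ = 0 := by
  simpa [Finset.Icc_eq_empty_of_lt hab] using lie_mem_biSup_Icc hbr htop hx hy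

theorem biSup_Icc_one_eq_top (hgr : ⨆ k, gr k = ⊤) (h0 : gr 0 = ⊥)
    (htop : ∀ k, N < k → gr k = ⊥) : ⨆ k ∈ Finset.Icc 1 N, gr k = ⊤ := by
  refine eq_top_iff.mpr (hgr ▸ iSup_le fun k => ?_)
  rcases Nat.eq_zero_or_pos k with rfl | hk
  · simp [h0]
  rcases le_or_gt k N with hkN | hkN
  · exact le_iSup₂_of_le k (Finset.mem_Icc.mpr ⟨hk, hkN⟩) le_rfl
  · simp [htop k hkN]

theorem eq_zero_of_forall_lie_gr_sub (hgr : DirectSum.IsInternal gr)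
    (hbr : ∀ k k' : ℕ, ∀ x ∈ gr k, ∀ y ∈ gr k', ⁅x, y⁆ ∈ gr (k + k'))
    {l : L →ₗ[R] R} (hlvan : ∀ k, k ≠ N → ∀ x ∈ gr k, l x = 0)
    (hnd : ∀ x : L, (∀ y : L, l ⁅x, y⁆ = 0) → x ∈ gr N) {k : ℕ} (hk : k < N) {x : L}
    (hx : x ∈ gr k) (h : ∀ y ∈ gr (N - k), l ⁅x, y⁆ = 0) : x = 0 := by
  have hxN : x ∈ gr N := by
    refine hnd x fun y => LinearMap.congr_fun (LinearMap.eq_zero_of_iSup_eq_top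
      hgr.submodule_iSup_eq_top (f := lieForm l x) fun j z hz => ?_) y
    by_cases hj : k + j = N
    · obtain rfl : j = N - k := by omega
      exact h z hz
    · exact hlvan _ hj _ (hbr k j x hx z hz)
  exact Submodule.disjoint_def.mp (hgr.submodule_iSupIndep.pairwiseDisjoint hk.ne) x hx hxN

theorem lie_mem_sup_biSup_Icc
    (hbr : ∀ k k' : ℕ, ∀ x ∈ gr k, ∀ y ∈ gr k', ⁅x, y⁆ ∈ gr (k + k'))
    (htop : ∀ k, N < k → gr k = ⊥) (hone : ⨆ k ∈ Finset.Icc 1 N, gr k = ⊤)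
    {n : ℕ} (hn : n ≤ N) {L₀ : Submodule R L} (hL₀ : L₀ ≤ gr n) (x : L) {m : L}
    (hm : m ∈ L₀ ⊔ ⨆ k ∈ Finset.Icc (n + 1) N, gr k) :
    ⁅x, m⁆ ∈ L₀ ⊔ ⨆ k ∈ Finset.Icc (n + 1) N, gr k := by
  obtain ⟨a, ha, b, hb, rfl⟩ := Submodule.mem_sup.mp hm
  have hx : x ∈ ⨆ k ∈ Finset.Icc 1 N, gr k := hone ▸ Submodule.mem_top
  have ha' : a ∈ ⨆ k ∈ Finset.Icc n N, gr k :=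
    Submodule.mem_iSup_of_mem n (Submodule.mem_iSup_of_mem (Finset.mem_Icc.mpr ⟨le_rfl, hn⟩)
      (hL₀ ha))
  rw [lie_add]
  refine add_mem (Submodule.mem_sup_right ?_) (Submodule.mem_sup_right ?_)
  · simpa only [add_comm 1 n] using lie_mem_biSup_Icc hbr htop hx ha'
  · have hmono : ⨆ k ∈ Finset.Icc (1 + (n + 1)) N, gr k ≤ ⨆ k ∈ Finset.Icc (n + 1) N, gr k :=
      biSup_mono fun _ => (Finset.Icc_subset_Icc_left (by omega) ·)
    exact hmono (lie_mem_biSup_Icc hbr htop hx hb)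

theorem lie_eq_zero_of_mem_sup_biSup_Icc
    (hbr : ∀ k k' : ℕ, ∀ x ∈ gr k, ∀ y ∈ gr k', ⁅x, y⁆ ∈ gr (k + k'))
    {n : ℕ} (htop : ∀ k, 2 * n < k → gr k = ⊥) {L₀ : Submodule R L} (hL₀ : L₀ ≤ gr n)
    {l : L →ₗ[R] R} (hl : Function.Injective (l.comp (gr (2 * n)).subtype))
    (hiso : ∀ x ∈ L₀, ∀ y ∈ L₀, l ⁅x, y⁆ = 0) {x y : L}
    (hx : x ∈ L₀ ⊔ ⨆ k ∈ Finset.Icc (n + 1) (2 * n), gr k)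
    (hy : y ∈ L₀ ⊔ ⨆ k ∈ Finset.Icc (n + 1) (2 * n), gr k) : ⁅x, y⁆ = 0 := by
  obtain ⟨a, ha, b, hb, rfl⟩ := Submodule.mem_sup.mp hx
  obtain ⟨a', ha', b', hb', rfl⟩ := Submodule.mem_sup.mp hy
  have hL₀' : ∀ {z}, z ∈ L₀ → z ∈ ⨆ k ∈ Finset.Icc n (2 * n), gr k := fun hz =>
    Submodule.mem_iSup_of_mem n (Submodule.mem_iSup_of_mem (by simp; omega) (hL₀ hz))
  have haa' : ⁅a, a'⁆ = 0 := by
    have hmem : ⁅a, a'⁆ ∈ gr (2 * n) := two_mul n ▸ hbr n n a (hL₀ ha) a' (hL₀ ha')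
    exact congrArg Subtype.val (hl (a₁ := ⟨_, hmem⟩) (a₂ := 0) (by simpa using hiso a ha a' ha'))
  rw [lie_add, add_lie, add_lie, haa',
    lie_eq_zero_of_mem_biSup_Icc hbr htop (by omega) (hL₀' ha) hb',
    lie_eq_zero_of_mem_biSup_Icc hbr htop (by omega) hb (hL₀' ha'),
    lie_eq_zero_of_mem_biSup_Icc hbr htop (by omega) hb hb', add_zero, add_zero]

end Graded

end LieAlgebra

section GradedFiniteDimensional

variable {K L : Type*} [Field K] [LieRing L] [LieAlgebra K L] {gr : ℕ → Submodule K L} {N : ℕ}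

theorem finrank_gr_le_finrank_gr_sub [FiniteDimensional K L] (hgr : DirectSum.IsInternal gr)
    (hbr : ∀ k k' : ℕ, ∀ x ∈ gr k, ∀ y ∈ gr k', ⁅x, y⁆ ∈ gr (k + k'))
    {l : L →ₗ[K] K} (hlvan : ∀ k, k ≠ N → ∀ x ∈ gr k, l x = 0)
    (hnd : ∀ x : L, (∀ y : L, l ⁅x, y⁆ = 0) → x ∈ gr N) {k : ℕ} (hk : k < N) :
    finrank K (gr k) ≤ finrank K (gr (N - k)) :=
  finrank_le_finrank_of_separatingLeft (B := (lieForm l).domRestrict₁₂ (gr k) (gr (N - k)))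
    fun x hx => Subtype.ext <|
      eq_zero_of_forall_lie_gr_sub hgr hbr hlvan hnd hk x.2 fun y hy => hx ⟨y, hy⟩

theorem finrank_gr_eq_finrank_gr_sub [FiniteDimensional K L] (hgr : DirectSum.IsInternal gr)
    (hbr : ∀ k k' : ℕ, ∀ x ∈ gr k, ∀ y ∈ gr k', ⁅x, y⁆ ∈ gr (k + k'))
    {l : L →ₗ[K] K} (hlvan : ∀ k, k ≠ N → ∀ x ∈ gr k, l x = 0)
    (hnd : ∀ x : L, (∀ y : L, l ⁅x, y⁆ = 0) → x ∈ gr N) {k : ℕ} (hk0 : 0 < k) (hk : k < N) :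
    finrank K (gr k) = finrank K (gr (N - k)) := by
  refine (finrank_gr_le_finrank_gr_sub hgr hbr hlvan hnd hk).antisymm ?_
  have := finrank_gr_le_finrank_gr_sub hgr hbr hlvan hnd (k := N - k) (by omega)
  rwa [Nat.sub_sub_self hk.le] at this

theorem injective_comp_subtype_gr (hgr : ⨆ k, gr k = ⊤) {l : L →ₗ[K] K}
    (hlvan : ∀ k, k ≠ N → ∀ x ∈ gr k, l x = 0) (hdim : finrank K (gr N) = 1) (hl : l ≠ 0) :
    Function.Injective (l.comp (gr N).subtype) := by
  refine LinearMap.injective_of_finrank_eq_one hdim fun h => hl ?_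
  refine LinearMap.eq_zero_of_iSup_eq_top hgr fun k x hx => ?_
  by_cases hk : k = N
  · subst hk
    exact LinearMap.congr_fun h ⟨x, hx⟩
  · exact hlvan k hk x hx

end GradedFiniteDimensional

/-- Let `g` be a graded Lie algebra of dimension `2d+1` with one-dimensional center
`z(g) = g_N`, `N = 2N₀` even, with `B_l` non-degenerate on `g/z(g)` for `l = λZ*`, `λ ≠ 0`.
Then `B_l` restricted to `g_{N₀}` is a non-degenerate (symplectic) form, so `dim g_{N₀}` is
even; and for any Lagrangian subspace `L₀ ⊆ g_{N₀}`, the subspace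
`m = L₀ ⊕ (⊕_{k=N₀+1}^N g_k)` is an Abelian ideal of `g` of dimension `d+1` on whose
brackets `l` vanishes. -/
theorem graded_even_polarization {L : Type*} [LieRing L] [LieAlgebra ℝ L]
    [FiniteDimensional ℝ L]
    (gr : ℕ → Submodule ℝ L) (N N₀ d : ℕ)
    (hN : N = 2 * N₀) (hN₀ : 1 ≤ N₀)
    (hdimL : Module.finrank ℝ L = 2 * d + 1)
    (hinternal : DirectSum.IsInternal gr)
    (h0 : gr 0 = ⊥)
    (htop : ∀ k, N < k → gr k = ⊥)
    (hbr : ∀ k k' : ℕ, ∀ x ∈ gr k, ∀ y ∈ gr k', ⁅x, y⁆ ∈ gr (k + k'))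
    (hcenter : (LieAlgebra.center ℝ L).toSubmodule = gr N)
    (hdim : Module.finrank ℝ (gr N) = 1)
    (l : L →ₗ[ℝ] ℝ) (hlne : l ≠ 0)
    (hlvan : ∀ k, k ≠ N → ∀ x ∈ gr k, l x = 0)
    (hnd : ∀ x : L, (∀ y : L, l ⁅x, y⁆ = 0) → x ∈ (LieAlgebra.center ℝ L).toSubmodule) :
    (∀ x ∈ gr N₀, (∀ y ∈ gr N₀, l ⁅x, y⁆ = 0) → x = 0) ∧
    Even (Module.finrank ℝ (gr N₀)) ∧
    (∀ L₀ : Submodule ℝ L, L₀ ≤ gr N₀ →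
      Module.finrank ℝ L₀ = Module.finrank ℝ (gr N₀) / 2 →
      (∀ x ∈ L₀, ∀ y ∈ L₀, l ⁅x, y⁆ = 0) →
      (∃ I : LieIdeal ℝ L, I.toSubmodule = L₀ ⊔ ⨆ k ∈ Set.Icc (N₀ + 1) N, gr k) ∧
      (∀ x ∈ L₀ ⊔ ⨆ k ∈ Set.Icc (N₀ + 1) N, gr k,
        ∀ y ∈ L₀ ⊔ ⨆ k ∈ Set.Icc (N₀ + 1) N, gr k, ⁅x, y⁆ = 0) ∧
      Module.finrank ℝ (L₀ ⊔ ⨆ k ∈ Set.Icc (N₀ + 1) N, gr k : Submodule ℝ L) = d + 1 ∧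
      (∀ x ∈ L₀ ⊔ ⨆ k ∈ Set.Icc (N₀ + 1) N, gr k,
        ∀ y ∈ L₀ ⊔ ⨆ k ∈ Set.Icc (N₀ + 1) N, gr k, l ⁅x, y⁆ = 0)) := by
  subst hN
  have hind := hinternal.submodule_iSupIndep
  have hone := biSup_Icc_one_eq_top hinternal.submodule_iSup_eq_top h0 htop
  have hnd' : ∀ x : L, (∀ y : L, l ⁅x, y⁆ = 0) → x ∈ gr (2 * N₀) := fun x hx => hcenter ▸ hnd x hx
  have hcount := sum_Icc_add_one_eq_of_symm (fun k => finrank ℝ (gr k)) hN₀ hdim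
    fun k hk0 hk => finrank_gr_eq_finrank_gr_sub hinternal hbr hlvan hnd' hk0 (by omega)
  rw [← finrank_biSup_eq_sum_of_iSupIndep hind, hone, finrank_top, hdimL] at hcount
  refine ⟨fun x hx h => eq_zero_of_forall_lie_gr_sub hinternal hbr hlvan hnd' (by omega) hx
      (by rwa [show 2 * N₀ - N₀ = N₀ by omega]), ⟨d + 1 - ∑ k ∈ Finset.Icc (N₀ + 1) (2 * N₀),
      finrank ℝ (gr k), by omega⟩, fun L₀ hL₀ hL₀dim hiso => ?_⟩
  rw [← Finset.coe_Icc, Finset.iSup_coe]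
  have habel := fun x hx y hy => lie_eq_zero_of_mem_sup_biSup_Icc (x := x) (y := y) hbr htop hL₀
    (injective_comp_subtype_gr hinternal.submodule_iSup_eq_top hlvan hdim hlne) hiso hx hy
  have hdisj : Disjoint L₀ (⨆ k ∈ Finset.Icc (N₀ + 1) (2 * N₀), gr k) :=
    (hind.disjoint_biSup (y := ↑(Finset.Icc (N₀ + 1) (2 * N₀))) (by simp)).mono_left hL₀
  refine ⟨⟨{ toSubmodule := _, lie_mem := fun {x _} hm =>
      lie_mem_sup_biSup_Icc hbr htop hone (by omega) hL₀ x hm }, rfl⟩, habel, ?_,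
    fun x hx y hy => by rw [habel x hx y hy, map_zero]⟩
  rw [finrank_sup_of_disjoint hdisj, finrank_biSup_eq_sum_of_iSupIndep hind]
  omega
end

section
/- Under the hypotheses of the density lemma (square-integrable π, quasi-lattice Γ with fundamental domain Σ, orthonormal system {π(γ)w}), if μ(Σ)^{-1} = d_π then for every v ∈ H and almost every g ∈ Σ, ‖v‖² = Σ_{γ∈Γ} |⟨v, π(gγ)w⟩|²; i.e., the translated system {π(gγ)w : γ ∈ Γ} is a Parseval frame (in fact ONB) for almost every g. -/
/-!
Bessel's inequality for the orthonormal family `γ ↦ π(gγ)w` bounds `∑_γ |⟨v, π(gγ)w⟩|²` by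
`‖v‖²` for every `g`. Integrating this sum over the fundamental domain `Σ` unfolds, by right
invariance and the tiling `G = ⊔_γ Σγ`, to `∫_G |⟨v, π(g)w⟩|² dg = ‖v‖² / d = μ(Σ) ‖v‖²`, which is
the integral of the bound over `Σ`. A function bounded by a constant and with the same integral
as that constant over a set of finite measure equals it almost everywhere there.
-/

open MeasureTheory
open scoped ENNReal InnerProductSpace

section Tiling

variable {G : Type*} [Group G] [MeasurableSpace G] [MeasurableMul G]
  {μ : Measure G} [μ.IsMulRightInvariant] {Γ s : Set G}

theorem setLIntegral_comp_mul_right (f : G → ℝ≥0∞) (γ : G) :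
    ∫⁻ g in s, f (g * γ) ∂μ = ∫⁻ g in (· * γ⁻¹) ⁻¹' s, f g ∂μ := by
  have hpre : (· * γ) ⁻¹' ((· * γ⁻¹) ⁻¹' s) = s := by
    ext g
    simp
  rw [← (measurePreserving_mul_right μ γ).setLIntegral_comp_preimage_emb
    (MeasurableEquiv.mulRight γ).measurableEmbedding f ((· * γ⁻¹) ⁻¹' s), hpre]

theorem lintegral_eq_setLIntegral_tsum_mul_right [Countable Γ] (hs : MeasurableSet s)
    (hfund : ∀ g : G, ∃! γ : G, γ ∈ Γ ∧ g * γ⁻¹ ∈ s) {f : G → ℝ≥0∞} (hf : AEMeasurable f μ) :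
    ∫⁻ g, f g ∂μ = ∫⁻ g in s, ∑' γ : Γ, f (g * γ) ∂μ := by
  have hcover : ⋃ γ : Γ, (· * (γ : G)⁻¹) ⁻¹' s = Set.univ := by
    refine Set.eq_univ_of_forall fun g => Set.mem_iUnion.2 ?_
    obtain ⟨γ, ⟨hγ, hgγ⟩, -⟩ := hfund g
    exact ⟨⟨γ, hγ⟩, hgγ⟩
  have hdisj : Pairwise (Function.onFun Disjoint fun γ : Γ => (· * (γ : G)⁻¹) ⁻¹' s) := by
    refine fun γ₁ γ₂ hne => Set.disjoint_left.2 fun g h₁ h₂ => hne ?_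
    obtain ⟨γ, -, huniq⟩ := hfund g
    exact Subtype.ext ((huniq γ₁ ⟨γ₁.2, h₁⟩).trans (huniq γ₂ ⟨γ₂.2, h₂⟩).symm)
  have hf_mul (γ : Γ) : AEMeasurable (fun g => f (g * γ)) μ :=
    hf.comp_quasiMeasurePreserving (measurePreserving_mul_right μ (γ : G)).quasiMeasurePreserving
  rw [lintegral_tsum fun γ => (hf_mul γ).restrict]
  simp_rw [setLIntegral_comp_mul_right]
  rw [← lintegral_iUnion (fun γ => measurable_mul_const _ hs) hdisj, hcover, setLIntegral_univ]

theorem ae_tsum_mul_right_eq_of_tsum_le [Countable Γ] (hs : MeasurableSet s)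
    (hfund : ∀ g : G, ∃! γ : G, γ ∈ Γ ∧ g * γ⁻¹ ∈ s) (hμs : μ s ≠ ∞)
    {F : G → ℝ} (hF0 : ∀ g, 0 ≤ F g) (hFi : Integrable F μ) {c : ℝ}
    (hint : ∫ g, F g ∂μ = (μ s).toReal * c) (hsum : ∀ g, Summable fun γ : Γ => F (g * γ))
    (hle : ∀ g, ∑' γ : Γ, F (g * γ) ≤ c) :
    ∀ᵐ g ∂μ.restrict s, ∑' γ : Γ, F (g * γ) = c := by
  have hc : 0 ≤ c := (tsum_nonneg fun _ => hF0 _).trans (hle 1)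
  have hofReal (g : G) :
      ENNReal.ofReal (∑' γ : Γ, F (g * γ)) = ∑' γ : Γ, ENNReal.ofReal (F (g * γ)) :=
    ENNReal.ofReal_tsum_of_nonneg (fun _ => hF0 _) (hsum g)
  have hlint : ∫⁻ g in s, ENNReal.ofReal (∑' γ : Γ, F (g * γ)) ∂μ = μ s * ENNReal.ofReal c := by
    simp_rw [hofReal]
    rw [← lintegral_eq_setLIntegral_tsum_mul_right hs hfund hFi.aemeasurable.ennreal_ofReal,
      ← ofReal_integral_eq_lintegral_ofReal hFi (ae_of_all _ hF0), hint,
      ENNReal.ofReal_mul ENNReal.toReal_nonneg, ENNReal.ofReal_toReal hμs]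
  have hae : (fun g => ENNReal.ofReal (∑' γ : Γ, F (g * γ))) =ᵐ[μ.restrict s]
      fun _ => ENNReal.ofReal c := by
    refine ae_eq_of_ae_le_of_lintegral_le (ae_of_all _ fun g => ENNReal.ofReal_le_ofReal (hle g))
      ?_ aemeasurable_const ?_
    · rw [hlint]
      exact ENNReal.mul_ne_top hμs ENNReal.ofReal_ne_top
    · rw [hlint, setLIntegral_const, mul_comm]
  filter_upwards [hae] with g hg
  exact (ENNReal.ofReal_eq_ofReal_iff (tsum_nonneg fun _ => hF0 _) hc).1 hg

end Tiling

section Bessel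

variable {𝕜 E ι : Type*} [RCLike 𝕜] [NormedAddCommGroup E] [InnerProductSpace 𝕜 E]
  {e : ι → E}

theorem Orthonormal.tsum_norm_inner_sq_le (he : Orthonormal 𝕜 e) (x : E) :
    ∑' i, ‖⟪x, e i⟫_𝕜‖ ^ 2 ≤ ‖x‖ ^ 2 := by
  simpa only [norm_inner_symm] using he.tsum_inner_products_le x

theorem Orthonormal.summable_norm_inner_sq (he : Orthonormal 𝕜 e) (x : E) :
    Summable fun i => ‖⟪x, e i⟫_𝕜‖ ^ 2 := by
  simpa only [norm_inner_symm] using he.inner_products_summable x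

end Bessel

theorem translated_parseval_general {G H : Type*} [Group G] [MeasurableSpace G] [MeasurableMul₂ G]
    [NormedAddCommGroup H] [InnerProductSpace ℂ H] [CompleteSpace H]
    (μ : Measure G) [μ.IsMulRightInvariant]
    (π : G →* (H ≃ₗᵢ[ℂ] H)) (w : H)
    (d : ℝ)
    (hsi : ∀ v : H, d * ∫ g, ‖⟪v, π g w⟫_ℂ‖ ^ 2 ∂μ = ‖v‖ ^ 2)
    (Γ : Set G) (hΓ : Γ.Countable)
    (Sfd : Set G) (hSm : MeasurableSet Sfd) (hSfin : μ Sfd ≠ ⊤)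
    (hfund : ∀ g : G, ∃! γ : G, γ ∈ Γ ∧ g * γ⁻¹ ∈ Sfd)
    (hON : Orthonormal ℂ (fun γ : Γ => π (γ : G) w))
    (hvol : (μ Sfd).toReal * d = 1) :
    ∀ v : H, ∀ᵐ g ∂(μ.restrict Sfd),
      ‖v‖ ^ 2 = ∑' γ : Γ, ‖⟪v, π (g * (γ : G)) w⟫_ℂ‖ ^ 2 := by
  intro v
  have : Countable Γ := hΓ.to_subtype
  have hONg (g : G) : Orthonormal ℂ fun γ : Γ => π (g * γ) w := by
    simpa only [map_mul, LinearIsometryEquiv.coe_mul, Function.comp_def]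
      using hON.comp_linearIsometryEquiv (π g)
  have hint : ∫ g, ‖⟪v, π g w⟫_ℂ‖ ^ 2 ∂μ = (μ Sfd).toReal * ‖v‖ ^ 2 := by
    rw [← hsi v, ← mul_assoc, hvol, one_mul]
  have hFi : Integrable (fun g => ‖⟪v, π g w⟫_ℂ‖ ^ 2) μ := by
    rcases eq_or_ne v 0 with rfl | hv
    · simp
    · refine Integrable.of_integral_ne_zero (right_ne_zero_of_mul (a := d) ?_)
      rw [hsi v]
      positivity
  filter_upwards [ae_tsum_mul_right_eq_of_tsum_le hSm hfund hSfin (fun _ => by positivity) hFi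
    hint (fun g => (hONg g).summable_norm_inner_sq v) (fun g => (hONg g).tsum_norm_inner_sq_le v)]
    with g hg
  exact hg.symm

/-- Under the hypotheses of the density lemma (square-integrable `π` with formal degree `d`,
quasi-lattice `Γ` with fundamental domain `Σ`, orthonormal system `{π(γ)w}`), if
`μ(Σ)⁻¹ = d` then for every `v` and almost every `g ∈ Σ`,
`‖v‖² = Σ_{γ∈Γ} |⟨v, π(gγ)w⟩|²`: the translated system is a Parseval frame (in fact an
orthonormal basis) for almost every `g`. -/
theorem translated_parseval {G H : Type*} [Group G] [MeasurableSpace G] [MeasurableMul₂ G]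
    [NormedAddCommGroup H] [InnerProductSpace ℂ H] [CompleteSpace H]
    (μ : Measure G) [μ.IsMulRightInvariant]
    (π : G →* (H ≃ₗᵢ[ℂ] H)) (w : H) (hw : ‖w‖ = 1)
    (d : ℝ) (hd : 0 < d)
    (hsi : ∀ v : H, d * ∫ g, ‖⟪v, π g w⟫_ℂ‖ ^ 2 ∂μ = ‖v‖ ^ 2)
    (Γ : Set G) (hΓ : Γ.Countable)
    (Sfd : Set G) (hSm : MeasurableSet Sfd) (hSfin : μ Sfd ≠ ⊤) (hSpos : μ Sfd ≠ 0)
    (hfund : ∀ g : G, ∃! γ : G, γ ∈ Γ ∧ g * γ⁻¹ ∈ Sfd)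
    (hON : Orthonormal ℂ (fun γ : Γ => π (γ : G) w))
    (hvol : (μ Sfd).toReal * d = 1) :
    ∀ v : H, ∀ᵐ g ∂(μ.restrict Sfd),
      ‖v‖ ^ 2 = ∑' γ : Γ, ‖⟪v, π (g * (γ : G)) w⟫_ℂ‖ ^ 2 :=
  translated_parseval_general μ π w d hsi Γ hΓ Sfd hSm hSfin hfund hON hvol
end
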